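/- Every deduction Π in BPR with conclusion φ and premises (Γ;Δ) can be reduced to a deduction Π' in BPR with the same conclusion φ and the same premises (Γ;Δ) such that every application of the rules PR(+), PR(−), ⊥(+) and ⊤(−) in Π' has atomic premises and an atomic conclusion. -/
import Mathlib


/-- Atomic propositions; the set `At` includes the units `⊥` and `⊤`. -/
inductive Atom : Type where
  | bot : Atom
  | top : Atom
  | prop : ℕ → Atom
deriving DecidableEq

/-- Formulas over `At`, built with `∧`, `∨`, `→` and co-implication `↤`. -/
inductive Formula : Type where
  | atom : Atom → Formula
  | conj : Formula → Formula → Formula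
  | disj : Formula → Formula → Formula
  | impl : Formula → Formula → Formula
  | coimpl : Formula → Formula → Formula
deriving DecidableEq

abbrev Formula.bot : Formula := .atom .bot
abbrev Formula.top : Formula := .atom .top

/-- A formula is atomic iff it is a member of `At` (including `⊥` and `⊤`). -/
def Formula.isAtomic : Formula → Prop
  | .atom _ => True
  | _ => False

/-- Polarity of a statement: proof (`pos`) or refutation (`neg`). -/
inductive Side : Type where
  | pos : Side
  | neg : Side
deriving DecidableEq
/-- Natural deduction derivations of the bilateral system `BPR`.
`Deriv Γ Δ s φ` is a deduction of `φ` as a proof (`s = pos`) or refutation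
(`s = neg`) from proof assumptions among `Γ` and refutation assumptions
(counterassumptions) among `Δ`. -/
inductive Deriv : Set Formula → Set Formula → Side → Formula → Type where
  | hypP {Γ Δ : Set Formula} {φ : Formula} (h : φ ∈ Γ) : Deriv Γ Δ .pos φ
  | hypN {Γ Δ : Set Formula} {φ : Formula} (h : φ ∈ Δ) : Deriv Γ Δ .neg φ
  -- ⊤(+) and ⊥(−) axioms
  | topP {Γ Δ} : Deriv Γ Δ .pos Formula.top
  | botN {Γ Δ} : Deriv Γ Δ .neg Formula.bot
  -- implication
  | impI {Γ Δ φ ψ} : Deriv (insert φ Γ) Δ .pos ψ → Deriv Γ Δ .pos (.impl φ ψ)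
  | impE {Γ Δ φ ψ} : Deriv Γ Δ .pos (.impl φ ψ) → Deriv Γ Δ .pos φ → Deriv Γ Δ .pos ψ
  | impIN {Γ Δ φ ψ} : Deriv Γ Δ .pos φ → Deriv Γ Δ .neg ψ → Deriv Γ Δ .neg (.impl φ ψ)
  | impE1N {Γ Δ φ ψ} : Deriv Γ Δ .neg (.impl φ ψ) → Deriv Γ Δ .pos φ
  | impE2N {Γ Δ φ ψ} : Deriv Γ Δ .neg (.impl φ ψ) → Deriv Γ Δ .neg ψ
  -- conjunction
  | andI {Γ Δ φ ψ} : Deriv Γ Δ .pos φ → Deriv Γ Δ .pos ψ → Deriv Γ Δ .pos (.conj φ ψ)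
  | andE1 {Γ Δ φ ψ} : Deriv Γ Δ .pos (.conj φ ψ) → Deriv Γ Δ .pos φ
  | andE2 {Γ Δ φ ψ} : Deriv Γ Δ .pos (.conj φ ψ) → Deriv Γ Δ .pos ψ
  | andI1N {Γ Δ φ ψ} : Deriv Γ Δ .neg φ → Deriv Γ Δ .neg (.conj φ ψ)
  | andI2N {Γ Δ φ ψ} : Deriv Γ Δ .neg ψ → Deriv Γ Δ .neg (.conj φ ψ)
  | andEN {Γ Δ φ ψ s χ} : Deriv Γ Δ .neg (.conj φ ψ) →
      Deriv Γ (insert φ Δ) s χ → Deriv Γ (insert ψ Δ) s χ → Deriv Γ Δ s χ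
  -- disjunction
  | orI1 {Γ Δ φ ψ} : Deriv Γ Δ .pos φ → Deriv Γ Δ .pos (.disj φ ψ)
  | orI2 {Γ Δ φ ψ} : Deriv Γ Δ .pos ψ → Deriv Γ Δ .pos (.disj φ ψ)
  | orE {Γ Δ φ ψ s χ} : Deriv Γ Δ .pos (.disj φ ψ) →
      Deriv (insert φ Γ) Δ s χ → Deriv (insert ψ Γ) Δ s χ → Deriv Γ Δ s χ
  | orIN {Γ Δ φ ψ} : Deriv Γ Δ .neg φ → Deriv Γ Δ .neg ψ → Deriv Γ Δ .neg (.disj φ ψ)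
  | orE1N {Γ Δ φ ψ} : Deriv Γ Δ .neg (.disj φ ψ) → Deriv Γ Δ .neg φ
  | orE2N {Γ Δ φ ψ} : Deriv Γ Δ .neg (.disj φ ψ) → Deriv Γ Δ .neg ψ
  -- co-implication
  | coimpI {Γ Δ φ ψ} : Deriv Γ Δ .pos φ → Deriv Γ Δ .neg ψ → Deriv Γ Δ .pos (.coimpl φ ψ)
  | coimpE1 {Γ Δ φ ψ} : Deriv Γ Δ .pos (.coimpl φ ψ) → Deriv Γ Δ .pos φ
  | coimpE2 {Γ Δ φ ψ} : Deriv Γ Δ .pos (.coimpl φ ψ) → Deriv Γ Δ .neg ψ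
  | coimpIN {Γ Δ φ ψ} : Deriv Γ (insert ψ Δ) .neg φ → Deriv Γ Δ .neg (.coimpl φ ψ)
  | coimpEN {Γ Δ φ ψ} : Deriv Γ Δ .neg (.coimpl φ ψ) → Deriv Γ Δ .neg ψ → Deriv Γ Δ .neg φ
  -- ⊥(+) and ⊤(−): from a proof of ⊥ / refutation of ⊤, conclude any formula on either side
  | botP {Γ Δ s φ} : Deriv Γ Δ .pos Formula.bot → Deriv Γ Δ s φ
  | topN {Γ Δ s φ} : Deriv Γ Δ .neg Formula.top → Deriv Γ Δ s φ
  -- coordination rules PR(+) and PR(−)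
  | prP {Γ Δ φ ψ} : Deriv Γ Δ .pos φ → Deriv Γ Δ .neg φ → Deriv Γ Δ .pos ψ
  | prN {Γ Δ φ ψ} : Deriv Γ Δ .pos φ → Deriv Γ Δ .neg φ → Deriv Γ Δ .neg ψ

/-- The deduction ends with an application of one of the rules
`⊥(+)`, `⊤(−)`, `PR(+)`, `PR(−)`. -/
def Deriv.endsSpecial : ∀ {Γ Δ : Set Formula} {s : Side} {φ : Formula}, Deriv Γ Δ s φ → Prop
  | _, _, _, _, .botP _ => True
  | _, _, _, _, .topN _ => True
  | _, _, _, _, .prP _ _ => True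
  | _, _, _, _, .prN _ _ => True
  | _, _, _, _, _ => False

/-- Every application of `PR(+)`, `PR(−)`, `⊥(+)`, `⊤(−)` in the deduction has
atomic premises and an atomic conclusion. -/
def Deriv.specialAtomic : ∀ {Γ Δ : Set Formula} {s : Side} {φ : Formula}, Deriv Γ Δ s φ → Prop
  | _, _, _, _, .hypP _ => True
  | _, _, _, _, .hypN _ => True
  | _, _, _, _, .topP => True
  | _, _, _, _, .botN => True
  | _, _, _, _, .impI d => d.specialAtomic
  | _, _, _, _, .impE d e => d.specialAtomic ∧ e.specialAtomic
  | _, _, _, _, .impIN d e => d.specialAtomic ∧ e.specialAtomic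
  | _, _, _, _, .impE1N d => d.specialAtomic
  | _, _, _, _, .impE2N d => d.specialAtomic
  | _, _, _, _, .andI d e => d.specialAtomic ∧ e.specialAtomic
  | _, _, _, _, .andE1 d => d.specialAtomic
  | _, _, _, _, .andE2 d => d.specialAtomic
  | _, _, _, _, .andI1N d => d.specialAtomic
  | _, _, _, _, .andI2N d => d.specialAtomic
  | _, _, _, _, .andEN d e f => d.specialAtomic ∧ e.specialAtomic ∧ f.specialAtomic
  | _, _, _, _, .orI1 d => d.specialAtomic
  | _, _, _, _, .orI2 d => d.specialAtomic
  | _, _, _, _, .orE d e f => d.specialAtomic ∧ e.specialAtomic ∧ f.specialAtomic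
  | _, _, _, _, .orIN d e => d.specialAtomic ∧ e.specialAtomic
  | _, _, _, _, .orE1N d => d.specialAtomic
  | _, _, _, _, .orE2N d => d.specialAtomic
  | _, _, _, _, .coimpI d e => d.specialAtomic ∧ e.specialAtomic
  | _, _, _, _, .coimpE1 d => d.specialAtomic
  | _, _, _, _, .coimpE2 d => d.specialAtomic
  | _, _, _, _, .coimpIN d => d.specialAtomic
  | _, _, _, _, .coimpEN d e => d.specialAtomic ∧ e.specialAtomic
  | _, _, _, φ, .botP d => φ.isAtomic ∧ d.specialAtomic
  | _, _, _, φ, .topN d => φ.isAtomic ∧ d.specialAtomic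
  | _, _, _, ψ, .prP (φ := χ) d e => χ.isAtomic ∧ ψ.isAtomic ∧ d.specialAtomic ∧ e.specialAtomic
  | _, _, _, ψ, .prN (φ := χ) d e => χ.isAtomic ∧ ψ.isAtomic ∧ d.specialAtomic ∧ e.specialAtomic

theorem weaken_ex {Γ Δ : Set Formula} {s : Side} {φ : Formula} (D : Deriv Γ Δ s φ) :
    D.specialAtomic → ∀ {Γ' Δ' : Set Formula}, Γ ⊆ Γ' → Δ ⊆ Δ' →
    ∃ D' : Deriv Γ' Δ' s φ, D'.specialAtomic := by
  induction D with
  | hypP h => intro _ Γ' Δ' hΓ _; exact ⟨.hypP (hΓ h), trivial⟩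
  | hypN h => intro _ Γ' Δ' _ hΔ; exact ⟨.hypN (hΔ h), trivial⟩
  | topP => intro _ Γ' Δ' _ _; exact ⟨.topP, by trivial⟩
  | botN => intro _ Γ' Δ' _ _; exact ⟨.botN, by trivial⟩
  | impI d ih =>
      intro hD Γ' Δ' hΓ hΔ
      obtain ⟨d', hd'⟩ := ih hD (Set.insert_subset_insert hΓ) hΔ
      exact ⟨.impI d', hd'⟩
  | impE d e ihd ihe =>
      intro hD Γ' Δ' hΓ hΔ
      obtain ⟨d', hd'⟩ := ihd hD.1 hΓ hΔ
      obtain ⟨e', he'⟩ := ihe hD.2 hΓ hΔ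
      exact ⟨.impE d' e', hd', he'⟩
  | impIN d e ihd ihe =>
      intro hD Γ' Δ' hΓ hΔ
      obtain ⟨d', hd'⟩ := ihd hD.1 hΓ hΔ
      obtain ⟨e', he'⟩ := ihe hD.2 hΓ hΔ
      exact ⟨.impIN d' e', hd', he'⟩
  | impE1N d ih =>
      intro hD Γ' Δ' hΓ hΔ
      obtain ⟨d', hd'⟩ := ih hD hΓ hΔ
      exact ⟨.impE1N d', hd'⟩
  | impE2N d ih =>
      intro hD Γ' Δ' hΓ hΔ
      obtain ⟨d', hd'⟩ := ih hD hΓ hΔ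
      exact ⟨.impE2N d', hd'⟩
  | andI d e ihd ihe =>
      intro hD Γ' Δ' hΓ hΔ
      obtain ⟨d', hd'⟩ := ihd hD.1 hΓ hΔ
      obtain ⟨e', he'⟩ := ihe hD.2 hΓ hΔ
      exact ⟨.andI d' e', hd', he'⟩
  | andE1 d ih =>
      intro hD Γ' Δ' hΓ hΔ
      obtain ⟨d', hd'⟩ := ih hD hΓ hΔ
      exact ⟨.andE1 d', hd'⟩
  | andE2 d ih =>
      intro hD Γ' Δ' hΓ hΔ
      obtain ⟨d', hd'⟩ := ih hD hΓ hΔ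
      exact ⟨.andE2 d', hd'⟩
  | andI1N d ih =>
      intro hD Γ' Δ' hΓ hΔ
      obtain ⟨d', hd'⟩ := ih hD hΓ hΔ
      exact ⟨.andI1N d', hd'⟩
  | andI2N d ih =>
      intro hD Γ' Δ' hΓ hΔ
      obtain ⟨d', hd'⟩ := ih hD hΓ hΔ
      exact ⟨.andI2N d', hd'⟩
  | andEN d e f ihd ihe ihf =>
      intro hD Γ' Δ' hΓ hΔ
      obtain ⟨d', hd'⟩ := ihd hD.1 hΓ hΔ
      obtain ⟨e', he'⟩ := ihe hD.2.1 hΓ (Set.insert_subset_insert hΔ)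
      obtain ⟨f', hf'⟩ := ihf hD.2.2 hΓ (Set.insert_subset_insert hΔ)
      exact ⟨.andEN d' e' f', hd', he', hf'⟩
  | orI1 d ih =>
      intro hD Γ' Δ' hΓ hΔ
      obtain ⟨d', hd'⟩ := ih hD hΓ hΔ
      exact ⟨.orI1 d', hd'⟩
  | orI2 d ih =>
      intro hD Γ' Δ' hΓ hΔ
      obtain ⟨d', hd'⟩ := ih hD hΓ hΔ
      exact ⟨.orI2 d', hd'⟩
  | orE d e f ihd ihe ihf =>
      intro hD Γ' Δ' hΓ hΔ
      obtain ⟨d', hd'⟩ := ihd hD.1 hΓ hΔ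
      obtain ⟨e', he'⟩ := ihe hD.2.1 (Set.insert_subset_insert hΓ) hΔ
      obtain ⟨f', hf'⟩ := ihf hD.2.2 (Set.insert_subset_insert hΓ) hΔ
      exact ⟨.orE d' e' f', hd', he', hf'⟩
  | orIN d e ihd ihe =>
      intro hD Γ' Δ' hΓ hΔ
      obtain ⟨d', hd'⟩ := ihd hD.1 hΓ hΔ
      obtain ⟨e', he'⟩ := ihe hD.2 hΓ hΔ
      exact ⟨.orIN d' e', hd', he'⟩
  | orE1N d ih =>
      intro hD Γ' Δ' hΓ hΔ
      obtain ⟨d', hd'⟩ := ih hD hΓ hΔ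
      exact ⟨.orE1N d', hd'⟩
  | orE2N d ih =>
      intro hD Γ' Δ' hΓ hΔ
      obtain ⟨d', hd'⟩ := ih hD hΓ hΔ
      exact ⟨.orE2N d', hd'⟩
  | coimpI d e ihd ihe =>
      intro hD Γ' Δ' hΓ hΔ
      obtain ⟨d', hd'⟩ := ihd hD.1 hΓ hΔ
      obtain ⟨e', he'⟩ := ihe hD.2 hΓ hΔ
      exact ⟨.coimpI d' e', hd', he'⟩
  | coimpE1 d ih =>
      intro hD Γ' Δ' hΓ hΔ
      obtain ⟨d', hd'⟩ := ih hD hΓ hΔ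
      exact ⟨.coimpE1 d', hd'⟩
  | coimpE2 d ih =>
      intro hD Γ' Δ' hΓ hΔ
      obtain ⟨d', hd'⟩ := ih hD hΓ hΔ
      exact ⟨.coimpE2 d', hd'⟩
  | coimpIN d ih =>
      intro hD Γ' Δ' hΓ hΔ
      obtain ⟨d', hd'⟩ := ih hD hΓ (Set.insert_subset_insert hΔ)
      exact ⟨.coimpIN d', hd'⟩
  | coimpEN d e ihd ihe =>
      intro hD Γ' Δ' hΓ hΔ
      obtain ⟨d', hd'⟩ := ihd hD.1 hΓ hΔ
      obtain ⟨e', he'⟩ := ihe hD.2 hΓ hΔ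
      exact ⟨.coimpEN d' e', hd', he'⟩
  | botP d ih =>
      intro hD Γ' Δ' hΓ hΔ
      obtain ⟨d', hd'⟩ := ih hD.2 hΓ hΔ
      exact ⟨.botP d', hD.1, hd'⟩
  | topN d ih =>
      intro hD Γ' Δ' hΓ hΔ
      obtain ⟨d', hd'⟩ := ih hD.2 hΓ hΔ
      exact ⟨.topN d', hD.1, hd'⟩
  | prP d e ihd ihe =>
      intro hD Γ' Δ' hΓ hΔ
      obtain ⟨d', hd'⟩ := ihd hD.2.2.1 hΓ hΔ
      obtain ⟨e', he'⟩ := ihe hD.2.2.2 hΓ hΔ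
      exact ⟨.prP d' e', hD.1, hD.2.1, hd', he'⟩
  | prN d e ihd ihe =>
      intro hD Γ' Δ' hΓ hΔ
      obtain ⟨d', hd'⟩ := ihd hD.2.2.1 hΓ hΔ
      obtain ⟨e', he'⟩ := ihe hD.2.2.2 hΓ hΔ
      exact ⟨.prN d' e', hD.1, hD.2.1, hd', he'⟩

theorem explode_atom (a : Atom) : ∀ (φ : Formula) (s : Side) {Γ Δ : Set Formula},
    (∃ d : Deriv Γ Δ .pos (.atom a), d.specialAtomic) →
    (∃ e : Deriv Γ Δ .neg (.atom a), e.specialAtomic) →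
    ∃ D : Deriv Γ Δ s φ, D.specialAtomic := by
  intro φ
  induction φ with
  | atom b =>
      rintro s Γ Δ ⟨d, hd⟩ ⟨e, he⟩
      cases s with
      | pos => exact ⟨.prP d e, trivial, trivial, hd, he⟩
      | neg => exact ⟨.prN d e, trivial, trivial, hd, he⟩
  | conj φ ψ ihφ ihψ =>
      intro s Γ Δ hd he
      cases s with
      | pos =>
          obtain ⟨d₁, h₁⟩ := ihφ .pos hd he
          obtain ⟨d₂, h₂⟩ := ihψ .pos hd he
          exact ⟨.andI d₁ d₂, h₁, h₂⟩
      | neg =>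
          obtain ⟨d₁, h₁⟩ := ihφ .neg hd he
          exact ⟨.andI1N d₁, h₁⟩
  | disj φ ψ ihφ ihψ =>
      intro s Γ Δ hd he
      cases s with
      | pos =>
          obtain ⟨d₁, h₁⟩ := ihφ .pos hd he
          exact ⟨.orI1 d₁, h₁⟩
      | neg =>
          obtain ⟨d₁, h₁⟩ := ihφ .neg hd he
          obtain ⟨d₂, h₂⟩ := ihψ .neg hd he
          exact ⟨.orIN d₁ d₂, h₁, h₂⟩
  | impl φ ψ ihφ ihψ =>
      intro s Γ Δ hd he
      cases s with
      | pos =>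
          obtain ⟨d, hd0⟩ := hd
          obtain ⟨e, he0⟩ := he
          obtain ⟨d', hd'⟩ := weaken_ex d hd0 (Set.subset_insert φ Γ) subset_rfl
          obtain ⟨e', he'⟩ := weaken_ex e he0 (Set.subset_insert φ Γ) subset_rfl
          obtain ⟨d₁, h₁⟩ := ihψ .pos ⟨d', hd'⟩ ⟨e', he'⟩
          exact ⟨.impI d₁, h₁⟩
      | neg =>
          obtain ⟨d₁, h₁⟩ := ihφ .pos hd he
          obtain ⟨d₂, h₂⟩ := ihψ .neg hd he
          exact ⟨.impIN d₁ d₂, h₁, h₂⟩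
  | coimpl φ ψ ihφ ihψ =>
      intro s Γ Δ hd he
      cases s with
      | pos =>
          obtain ⟨d₁, h₁⟩ := ihφ .pos hd he
          obtain ⟨d₂, h₂⟩ := ihψ .neg hd he
          exact ⟨.coimpI d₁ d₂, h₁, h₂⟩
      | neg =>
          obtain ⟨d, hd0⟩ := hd
          obtain ⟨e, he0⟩ := he
          obtain ⟨d', hd'⟩ := weaken_ex d hd0 subset_rfl (Set.subset_insert ψ Δ)
          obtain ⟨e', he'⟩ := weaken_ex e he0 subset_rfl (Set.subset_insert ψ Δ)
          obtain ⟨d₁, h₁⟩ := ihφ .neg ⟨d', hd'⟩ ⟨e', he'⟩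
          exact ⟨.coimpIN d₁, h₁⟩

theorem explode : ∀ (χ : Formula) {Γ Δ : Set Formula},
    (∃ d : Deriv Γ Δ .pos χ, d.specialAtomic) →
    (∃ e : Deriv Γ Δ .neg χ, e.specialAtomic) →
    ∀ (s : Side) (φ : Formula), ∃ D : Deriv Γ Δ s φ, D.specialAtomic := by
  intro χ
  induction χ with
  | atom a => exact fun hd he s φ => explode_atom a φ s hd he
  | conj φ ψ ihφ ihψ =>
      rintro Γ Δ ⟨d, hd⟩ ⟨e, he⟩ s χ
      obtain ⟨d₁, hd₁⟩ := weaken_ex d hd subset_rfl (Set.subset_insert φ Δ)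
      obtain ⟨d₂, hd₂⟩ := weaken_ex d hd subset_rfl (Set.subset_insert ψ Δ)
      obtain ⟨b₁, hb₁⟩ := ihφ ⟨.andE1 d₁, hd₁⟩ ⟨.hypN (Set.mem_insert φ Δ), by trivial⟩ s χ
      obtain ⟨b₂, hb₂⟩ := ihψ ⟨.andE2 d₂, hd₂⟩ ⟨.hypN (Set.mem_insert ψ Δ), by trivial⟩ s χ
      exact ⟨.andEN e b₁ b₂, he, hb₁, hb₂⟩
  | disj φ ψ ihφ ihψ =>
      rintro Γ Δ ⟨d, hd⟩ ⟨e, he⟩ s χ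
      obtain ⟨e₁, he₁⟩ := weaken_ex e he (Set.subset_insert φ Γ) subset_rfl
      obtain ⟨e₂, he₂⟩ := weaken_ex e he (Set.subset_insert ψ Γ) subset_rfl
      obtain ⟨b₁, hb₁⟩ := ihφ ⟨.hypP (Set.mem_insert φ Γ), by trivial⟩ ⟨.orE1N e₁, he₁⟩ s χ
      obtain ⟨b₂, hb₂⟩ := ihψ ⟨.hypP (Set.mem_insert ψ Γ), by trivial⟩ ⟨.orE2N e₂, he₂⟩ s χ
      exact ⟨.orE d b₁ b₂, hd, hb₁, hb₂⟩
  | impl φ ψ ihφ ihψ =>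
      rintro Γ Δ ⟨d, hd⟩ ⟨e, he⟩ s χ
      exact ihψ ⟨.impE d (.impE1N e), hd, he⟩ ⟨.impE2N e, he⟩ s χ
  | coimpl φ ψ ihφ ihψ =>
      rintro Γ Δ ⟨d, hd⟩ ⟨e, he⟩ s χ
      exact ihφ ⟨.coimpE1 d, hd⟩ ⟨.coimpEN e (.coimpE2 d), he, hd⟩ s χ

/-- Every deduction `D` in `BPR` with conclusion `φ` and premises
`(Γ;Δ)` can be reduced to a deduction `D'` in `BPR` with the same conclusion `φ` and
the same premises `(Γ;Δ)` such that every application of the rules `PR(+)`, `PR(−)`,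
`⊥(+)` and `⊤(−)` in `D'` has atomic premises and an atomic conclusion. -/
theorem atomic_premises_reduction (Γ Δ : Set Formula) (s : Side) (φ : Formula)
    (D : Deriv Γ Δ s φ) :
    ∃ D' : Deriv Γ Δ s φ, D'.specialAtomic := by
  induction D with
  | hypP h => exact ⟨.hypP h, trivial⟩
  | hypN h => exact ⟨.hypN h, trivial⟩
  | topP => exact ⟨.topP, by trivial⟩
  | botN => exact ⟨.botN, by trivial⟩
  | impI d ih => obtain ⟨d', h⟩ := ih; exact ⟨.impI d', h⟩
  | impE d e ihd ihe =>
      obtain ⟨d', h₁⟩ := ihd; obtain ⟨e', h₂⟩ := ihe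
      exact ⟨.impE d' e', h₁, h₂⟩
  | impIN d e ihd ihe =>
      obtain ⟨d', h₁⟩ := ihd; obtain ⟨e', h₂⟩ := ihe
      exact ⟨.impIN d' e', h₁, h₂⟩
  | impE1N d ih => obtain ⟨d', h⟩ := ih; exact ⟨.impE1N d', h⟩
  | impE2N d ih => obtain ⟨d', h⟩ := ih; exact ⟨.impE2N d', h⟩
  | andI d e ihd ihe =>
      obtain ⟨d', h₁⟩ := ihd; obtain ⟨e', h₂⟩ := ihe
      exact ⟨.andI d' e', h₁, h₂⟩
  | andE1 d ih => obtain ⟨d', h⟩ := ih; exact ⟨.andE1 d', h⟩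
  | andE2 d ih => obtain ⟨d', h⟩ := ih; exact ⟨.andE2 d', h⟩
  | andI1N d ih => obtain ⟨d', h⟩ := ih; exact ⟨.andI1N d', h⟩
  | andI2N d ih => obtain ⟨d', h⟩ := ih; exact ⟨.andI2N d', h⟩
  | andEN d e f ihd ihe ihf =>
      obtain ⟨d', h₁⟩ := ihd; obtain ⟨e', h₂⟩ := ihe; obtain ⟨f', h₃⟩ := ihf
      exact ⟨.andEN d' e' f', h₁, h₂, h₃⟩
  | orI1 d ih => obtain ⟨d', h⟩ := ih; exact ⟨.orI1 d', h⟩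
  | orI2 d ih => obtain ⟨d', h⟩ := ih; exact ⟨.orI2 d', h⟩
  | orE d e f ihd ihe ihf =>
      obtain ⟨d', h₁⟩ := ihd; obtain ⟨e', h₂⟩ := ihe; obtain ⟨f', h₃⟩ := ihf
      exact ⟨.orE d' e' f', h₁, h₂, h₃⟩
  | orIN d e ihd ihe =>
      obtain ⟨d', h₁⟩ := ihd; obtain ⟨e', h₂⟩ := ihe
      exact ⟨.orIN d' e', h₁, h₂⟩
  | orE1N d ih => obtain ⟨d', h⟩ := ih; exact ⟨.orE1N d', h⟩
  | orE2N d ih => obtain ⟨d', h⟩ := ih; exact ⟨.orE2N d', h⟩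
  | coimpI d e ihd ihe =>
      obtain ⟨d', h₁⟩ := ihd; obtain ⟨e', h₂⟩ := ihe
      exact ⟨.coimpI d' e', h₁, h₂⟩
  | coimpE1 d ih => obtain ⟨d', h⟩ := ih; exact ⟨.coimpE1 d', h⟩
  | coimpE2 d ih => obtain ⟨d', h⟩ := ih; exact ⟨.coimpE2 d', h⟩
  | coimpIN d ih => obtain ⟨d', h⟩ := ih; exact ⟨.coimpIN d', h⟩
  | coimpEN d e ihd ihe =>
      obtain ⟨d', h₁⟩ := ihd; obtain ⟨e', h₂⟩ := ihe
      exact ⟨.coimpEN d' e', h₁, h₂⟩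
  | botP d ih =>
      obtain ⟨d', h⟩ := ih
      exact explode Formula.bot ⟨d', h⟩ ⟨.botN, by trivial⟩ _ _
  | topN d ih =>
      obtain ⟨d', h⟩ := ih
      exact explode Formula.top ⟨.topP, by trivial⟩ ⟨d', h⟩ _ _
  | prP d e ihd ihe =>
      obtain ⟨d', h₁⟩ := ihd; obtain ⟨e', h₂⟩ := ihe
      exact explode _ ⟨d', h₁⟩ ⟨e', h₂⟩ _ _
  | prN d e ihd ihe =>
      obtain ⟨d', h₁⟩ := ihd; obtain ⟨e', h₂⟩ := ihe
      exact explode _ ⟨d', h₁⟩ ⟨e', h₂⟩ _ _
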